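/- Let (a_k) be the first n+1 Ulam numbers and define δ by min_{1≤k≤n} a_{k+1}/a_k = 1 + δ. If 0 < δ < 1/2, then every sum a_n + a_i with a_i ≤ δ a_n / 2 and 1 ≤ i < n that lies in [a_n, a_n + δ a_n / 2] must have a second representation a_n + a_i = a_j + a_k with 1 ≤ j < k ≤ n and (j,k) ≠ (i,n); otherwise a_{n+1} ≤ a_n + a_i < (1+δ) a_n, a contradiction. -/

import Mathlib

/-- `m` has exactly one representation as `a i + a j` with `1 ≤ i < j ≤ n`. -/
def UlamUniqueRep (a : ℕ → ℕ) (n m : ℕ) : Prop :=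
  ∃! p : ℕ × ℕ, 1 ≤ p.1 ∧ p.1 < p.2 ∧ p.2 ≤ n ∧ a p.1 + a p.2 = m

/-- `a` (indexed from 1) is the Ulam sequence: `a 1 = 1`, `a 2 = 2`, and for `n ≥ 2`,
`a (n+1)` is the least integer exceeding `a n` uniquely representable as the sum of
two distinct earlier terms. -/
def IsUlamSeq (a : ℕ → ℕ) : Prop :=
  a 1 = 1 ∧ a 2 = 2 ∧
    ∀ n, 2 ≤ n → IsLeast {m | a n < m ∧ UlamUniqueRep a n m} (a (n + 1))

/-! If `a n + a i` had no second representation, it would be a candidate for `a (n + 1)`,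
so `(1 + δ) a n ≤ a (n + 1) ≤ a n + a i ≤ (1 + δ / 2) a n`, impossible since `a n > 0`. -/

namespace IsUlamSeq

variable {a : ℕ → ℕ}

theorem lt_succ (ha : IsUlamSeq a) {n : ℕ} (hn : 2 ≤ n) : a n < a (n + 1) :=
  (ha.2.2 n hn).1.1

theorem succ_le_of_uniqueRep (ha : IsUlamSeq a) {n m : ℕ} (hn : 2 ≤ n) (hm : a n < m)
    (hrep : UlamUniqueRep a n m) : a (n + 1) ≤ m :=
  (ha.2.2 n hn).2 ⟨hm, hrep⟩

theorem le_apply (ha : IsUlamSeq a) {k : ℕ} (hk : 1 ≤ k) : k ≤ a k := by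
  induction k, hk using Nat.le_induction with
  | base => exact ha.1.ge
  | succ k hk ih =>
    rcases hk.eq_or_lt with rfl | hk
    · exact ha.2.1.ge
    · have := ha.lt_succ hk
      omega

theorem pos (ha : IsUlamSeq a) {k : ℕ} (hk : 1 ≤ k) : 0 < a k :=
  Nat.lt_of_lt_of_le hk (ha.le_apply hk)

end IsUlamSeq

theorem ulamUniqueRep_of_not_exists_ne {a : ℕ → ℕ} {n i : ℕ} (hi : 1 ≤ i) (hin : i < n)
    (h : ¬∃ j k, 1 ≤ j ∧ j < k ∧ k ≤ n ∧ (j, k) ≠ (i, n) ∧ a j + a k = a n + a i) :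
    UlamUniqueRep a n (a n + a i) := by
  refine ⟨(i, n), ⟨hi, hin, le_rfl, Nat.add_comm _ _⟩, ?_⟩
  rintro ⟨j, k⟩ ⟨hj, hjk, hkn, hsum⟩
  by_contra hne
  exact h ⟨j, k, hj, hjk, hkn, hne, hsum⟩

theorem ulam_blocked_sums_general (a : ℕ → ℕ) (ha : IsUlamSeq a) (n : ℕ) (hn : 2 ≤ n)
    (δ : ℝ) (hδ0 : 0 < δ)
    (hgap : ∀ k, 1 ≤ k → k ≤ n → (1 + δ) * (a k : ℝ) ≤ (a (k + 1) : ℝ))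
    (i : ℕ) (hi : 1 ≤ i) (hin : i < n) (hsmall : (a i : ℝ) ≤ δ * (a n : ℝ) / 2) :
    ((a n : ℝ) ≤ (a n : ℝ) + (a i : ℝ) ∧
        (a n : ℝ) + (a i : ℝ) ≤ (a n : ℝ) + δ * (a n : ℝ) / 2) ∧
      ∃ j k, 1 ≤ j ∧ j < k ∧ k ≤ n ∧ (j, k) ≠ (i, n) ∧ a j + a k = a n + a i := by
  refine ⟨⟨by simp, by linarith⟩, ?_⟩
  by_contra hcon
  have hsucc : a (n + 1) ≤ a n + a i :=
    ha.succ_le_of_uniqueRep hn (Nat.lt_add_of_pos_right (ha.pos hi))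
      (ulamUniqueRep_of_not_exists_ne hi hin hcon)
  have hsuccℝ : (a (n + 1) : ℝ) ≤ a n + a i := by exact_mod_cast hsucc
  have hδan : 0 < δ * (a n : ℝ) := mul_pos hδ0 (by exact_mod_cast ha.pos (by omega : 1 ≤ n))
  linarith [hgap n (by omega) le_rfl]

/-- If every consecutive ratio among the first `n+1` Ulam numbers is at least `1 + δ`
with `0 < δ < 1/2`, then every sum `a n + a i` with `1 ≤ i < n` and
`a i ≤ δ * a n / 2` (which lies in `[a n, a n + δ * a n / 2]`) must admit a second
representation `a j + a k` with `1 ≤ j < k ≤ n` and `(j, k) ≠ (i, n)`. -/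
theorem ulam_blocked_sums (a : ℕ → ℕ) (ha : IsUlamSeq a) (n : ℕ) (hn : 2 ≤ n)
    (δ : ℝ) (hδ0 : 0 < δ) (hδ1 : δ < 1 / 2)
    (hgap : ∀ k, 1 ≤ k → k ≤ n → (1 + δ) * (a k : ℝ) ≤ (a (k + 1) : ℝ))
    (i : ℕ) (hi : 1 ≤ i) (hin : i < n) (hsmall : (a i : ℝ) ≤ δ * (a n : ℝ) / 2) :
    ((a n : ℝ) ≤ (a n : ℝ) + (a i : ℝ) ∧
        (a n : ℝ) + (a i : ℝ) ≤ (a n : ℝ) + δ * (a n : ℝ) / 2) ∧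
      ∃ j k, 1 ≤ j ∧ j < k ∧ k ≤ n ∧ (j, k) ≠ (i, n) ∧ a j + a k = a n + a i :=
  ulam_blocked_sums_general a ha n hn δ hδ0 hgap i hi hin hsmall
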